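/- arXiv:1210.3874 — 8 statements merged into one kernel-verified Lean document; each statement's English description precedes it below -/
import Mathlib

section
/- For all a, b > 0 with a ≠ b, the Neuman-Sándor mean satisfies M(a,b) > (5/9)·G(a,b) + (4/9)·C(a,b), where G(a,b) = √(ab), C(a,b) = (a²+b²)/(a+b), and M(a,b) = (a−b)/(2·arsinh((a−b)/(a+b))). -/
noncomputable def NS (a b : ℝ) : ℝ := (a - b) / (2 * Real.arsinh ((a - b) / (a + b)))
noncomputable def Gmean (a b : ℝ) : ℝ := Real.sqrt (a * b)
noncomputable def Cmean (a b : ℝ) : ℝ := (a ^ 2 + b ^ 2) / (a + b)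

/-!
With `t = (a - b)/(a + b)` and `A = (a + b)/2` one has `M = A t / arsinh t`, `G = A √(1 - t²)`
and `C = A (1 + t²)`, so for `0 < t < 1` the claim is
`arsinh t · (5/9 √(1 - t²) + 4/9 (1 + t²)) < t`.
This follows from the Taylor bounds `arsinh t ≤ t - t³/6 + 3t⁵/40` and
`√(1 - t²) ≤ 1 - t²/2 - t⁴/8`: their combination leaves
`t - t⁵ (1/45 - 13 t²/540 + t⁴/192)`, and the bracket is positive on `(0, 1)`.
-/

open Real

lemma inv_sqrt_one_add_le {u : ℝ} (hu : 0 ≤ u) : (√(1 + u))⁻¹ ≤ 1 - u / 2 + 3 / 8 * u ^ 2 := by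
  have hp : 0 ≤ 1 - u / 2 + 3 / 8 * u ^ 2 := by nlinarith [sq_nonneg (u - 2 / 3)]
  rw [← sqrt_inv, sqrt_le_left hp, inv_le_iff_one_le_mul₀ (by positivity)]
  -- `(1 - u/2 + 3u²/8)² (1 + u) = 1 + u³ (40 - 15u + 9u²)/64`
  nlinarith [mul_nonneg (pow_nonneg hu 3) (add_nonneg (sq_nonneg (u - 5 / 6)) hu)]

lemma arsinh_le_taylor {x : ℝ} (hx : 0 ≤ x) : arsinh x ≤ x - x ^ 3 / 6 + 3 / 40 * x ^ 5 := by
  let f : ℝ → ℝ := fun x => x - x ^ 3 / 6 + 3 / 40 * x ^ 5 - arsinh x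
  have hf : ∀ x, HasDerivAt f (1 - x ^ 2 / 2 + 3 / 8 * (x ^ 2) ^ 2 - (√(1 + x ^ 2))⁻¹) x := by
    intro x
    refine ((((hasDerivAt_id x).sub ((hasDerivAt_pow 3 x).div_const 6)).add
      ((hasDerivAt_pow 5 x).const_mul (3 / 40))).sub (hasDerivAt_arsinh x)).congr_deriv ?_
    norm_num
    ring
  have hmono : Monotone f :=
    monotone_of_hasDerivAt_nonneg hf fun x => sub_nonneg.mpr (inv_sqrt_one_add_le (sq_nonneg x))
  have := hmono hx
  simp only [f, arsinh_zero] at this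
  linarith

lemma sqrt_one_sub_le_taylor {u : ℝ} (hu0 : 0 ≤ u) (hu1 : u ≤ 1) :
    √(1 - u) ≤ 1 - u / 2 - u ^ 2 / 8 := by
  rw [sqrt_le_left (by nlinarith)]
  -- `(1 - u/2 - u²/8)² = 1 - u + u³/8 + u⁴/64`
  nlinarith [pow_nonneg hu0 3, pow_nonneg hu0 4]

lemma arsinh_mul_weighted_lt {t : ℝ} (ht0 : 0 < t) (ht1 : t < 1) :
    arsinh t * (5 / 9 * √(1 - t ^ 2) + 4 / 9 * (1 + t ^ 2)) < t := by
  have hP : 0 < t - t ^ 3 / 6 + 3 / 40 * t ^ 5 := by nlinarith [pow_pos ht0 5, pow_pos ht0 3]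
  have hs := sqrt_one_sub_le_taylor (sq_nonneg t) (by nlinarith)
  have hbracket : 0 < 1 / 45 - 13 / 540 * t ^ 2 + 1 / 192 * t ^ 4 := by
    nlinarith [sq_nonneg (t ^ 2 - 1), pow_pos ht0 2]
  calc arsinh t * (5 / 9 * √(1 - t ^ 2) + 4 / 9 * (1 + t ^ 2))
      ≤ (t - t ^ 3 / 6 + 3 / 40 * t ^ 5) * (5 / 9 * √(1 - t ^ 2) + 4 / 9 * (1 + t ^ 2)) :=
        mul_le_mul_of_nonneg_right (arsinh_le_taylor ht0.le) (by positivity)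
    _ ≤ (t - t ^ 3 / 6 + 3 / 40 * t ^ 5) *
          (5 / 9 * (1 - t ^ 2 / 2 - (t ^ 2) ^ 2 / 8) + 4 / 9 * (1 + t ^ 2)) := by gcongr
    _ = t - t ^ 5 * (1 / 45 - 13 / 540 * t ^ 2 + 1 / 192 * t ^ 4) := by ring
    _ < t := by linarith [mul_pos (pow_pos ht0 5) hbracket]

lemma NS_comm (a b : ℝ) : NS a b = NS b a := by
  rw [NS, NS, show (a - b) / (a + b) = -((b - a) / (b + a)) by ring, arsinh_neg]
  ring

lemma Gmean_comm (a b : ℝ) : Gmean a b = Gmean b a := by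
  rw [Gmean, Gmean, mul_comm]

lemma Cmean_comm (a b : ℝ) : Cmean a b = Cmean b a := by
  rw [Cmean, Cmean, add_comm (a ^ 2), add_comm a]

section Substitution

variable {a b : ℝ}

lemma NS_eq (hab : a + b ≠ 0) :
    NS a b = (a + b) / 2 * ((a - b) / (a + b)) / arsinh ((a - b) / (a + b)) := by
  rw [NS]
  field_simp

lemma Gmean_eq (hab : 0 < a + b) :
    Gmean a b = (a + b) / 2 * √(1 - ((a - b) / (a + b)) ^ 2) := by
  rw [Gmean, ← sqrt_sq (by positivity : 0 ≤ (a + b) / 2), ← sqrt_mul (by positivity)]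
  congr 1
  field_simp
  ring

lemma Cmean_eq (hab : a + b ≠ 0) :
    Cmean a b = (a + b) / 2 * (1 + ((a - b) / (a + b)) ^ 2) := by
  rw [Cmean]
  field_simp
  ring

lemma NS_gt_of_lt (hb : 0 < b) (hba : b < a) :
    NS a b > (5 / 9) * Gmean a b + (4 / 9) * Cmean a b := by
  have hA : 0 < a + b := by linarith
  rw [NS_eq hA.ne', Gmean_eq hA, Cmean_eq hA.ne']
  set t := (a - b) / (a + b)
  have ht0 : 0 < t := div_pos (by linarith) hA
  have ht1 : t < 1 := (div_lt_one hA).mpr (by linarith)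
  rw [gt_iff_lt, lt_div_iff₀ (arsinh_pos_iff.mpr ht0)]
  nlinarith [mul_lt_mul_of_pos_left (arsinh_mul_weighted_lt ht0 ht1) hA]

end Substitution

theorem stmt0 (a b : ℝ) (ha : 0 < a) (hb : 0 < b) (hab : a ≠ b) :
    NS a b > (5 / 9) * Gmean a b + (4 / 9) * Cmean a b := by
  rcases hab.lt_or_gt with h | h
  · rw [NS_comm, Gmean_comm, Cmean_comm]
    exact NS_gt_of_lt ha h
  · exact NS_gt_of_lt hb h
end

section
/- If α < 5/9, then there exist a, b > 0 with a ≠ b such that M(a,b) < α·G(a,b) + (1−α)·C(a,b); that is, the constant 5/9 in the lower bound α·G + (1−α)·C < M is optimal. -/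
/-!
At `a = 1 + t`, `b = 1 - t` the three means are `t / arsinh t = 1 + t² / 6 + O(t⁴)`,
`√(1 - t²) = 1 - t² / 2 + O(t⁴)` and `1 + t²`, so
`α G + (1 - α) C = 1 + (1 - 3α/2) t² + O(t⁴)`.
Since `1 - 3α/2 > 1/6` exactly when `α < 5/9`, the inequality `M < α G + (1 - α) C` holds for
small `t`; the `O(t⁴)` terms are controlled by explicit polynomial bounds.
-/

open Real Finset

lemma sinh_le_of_nonneg_of_le_one {u : ℝ} (h0 : 0 ≤ u) (h1 : u ≤ 1) :
    sinh u ≤ u + u ^ 3 / 6 + u ^ 5 / 100 := by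
  have hu : |u| = u := abs_of_nonneg h0
  -- the error term of `Real.exp_bound` at order 5 is `|x| ^ 5 / 100`
  have hpos := Real.exp_bound (x := u) (by rwa [hu]) (n := 5) (by norm_num)
  have hneg := Real.exp_bound (x := -u) (by rwa [abs_neg, hu]) (n := 5) (by norm_num)
  rw [abs_neg, hu] at hneg
  rw [hu] at hpos
  simp only [sum_range_succ, sum_range_zero, Nat.factorial] at hpos hneg
  norm_num at hpos hneg
  rw [sinh_eq]
  linarith [(abs_le.1 hpos).2, (abs_le.1 hneg).1]

lemma sub_cube_div_six_le_arsinh {t : ℝ} (h0 : 0 < t) (h1 : t ≤ 1 / 2) :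
    t - t ^ 3 / 6 ≤ arsinh t := by
  have ht2 : t ^ 2 ≤ 1 / 4 := by nlinarith
  have hu0 : 0 ≤ t - t ^ 3 / 6 := by nlinarith [mul_le_mul_of_nonneg_left ht2 h0.le]
  have hu1 : t - t ^ 3 / 6 ≤ 1 := by nlinarith [pow_nonneg h0.le 3]
  have h3 : (t - t ^ 3 / 6) ^ 3 ≤ t ^ 3 - t ^ 5 / 2 + t ^ 7 / 12 := by
    nlinarith [pow_nonneg h0.le 9]
  have h5 : (t - t ^ 3 / 6) ^ 5 ≤ t ^ 5 :=
    pow_le_pow_left₀ hu0 (by nlinarith [pow_nonneg h0.le 3]) 5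
  have h7 : t ^ 7 ≤ t ^ 5 / 4 := by
    nlinarith [mul_le_mul_of_nonneg_left ht2 (pow_nonneg h0.le 5)]
  rw [← sinh_le_sinh, sinh_arsinh]
  nlinarith [sinh_le_of_nonneg_of_le_one hu0 hu1, pow_nonneg h0.le 5]

lemma one_sub_div_two_sub_sq_le_sqrt_one_sub {s : ℝ} (h0 : 0 ≤ s) (h1 : s ≤ 1 / 4) :
    1 - s / 2 - s ^ 2 ≤ √(1 - s) :=
  le_sqrt_of_sq_le (by nlinarith [pow_nonneg h0 3, pow_nonneg h0 4])

lemma Gmean_le_Cmean {a b : ℝ} (ha : 0 < a) (hb : 0 < b) : Gmean a b ≤ Cmean a b := by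
  have hab : √(a * b) ≤ (a + b) / 2 := by
    rw [sqrt_le_left (by positivity)]
    nlinarith [sq_nonneg (a - b)]
  rw [Gmean, Cmean, le_div_iff₀ (by positivity)]
  nlinarith [sq_nonneg (a - b), sqrt_nonneg (a * b)]

lemma NS_one_add_one_sub (t : ℝ) : NS (1 + t) (1 - t) = t / arsinh t := by
  rw [NS, show (1 + t) - (1 - t) = 2 * t by ring, show (1 + t) + (1 - t) = 2 by ring,
    mul_div_cancel_left₀ t two_ne_zero, mul_div_mul_left t _ two_ne_zero]

lemma Gmean_one_add_one_sub (t : ℝ) : Gmean (1 + t) (1 - t) = √(1 - t ^ 2) := by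
  rw [Gmean]; ring_nf

lemma Cmean_one_add_one_sub (t : ℝ) : Cmean (1 + t) (1 - t) = 1 + t ^ 2 := by
  rw [Cmean, show (1 + t) + (1 - t) = 2 by ring]; ring

lemma div_arsinh_lt_of_sq_le {t β : ℝ} (ht0 : 0 < t) (ht : t ≤ 1 / 2) (hβ0 : 0 ≤ β)
    (hβ : β ≤ 5 / 9 - t ^ 2) :
    t / arsinh t < β * √(1 - t ^ 2) + (1 - β) * (1 + t ^ 2) := by
  set s := t ^ 2
  have hs0 : 0 < s := by positivity
  have hs1 : s ≤ 1 / 4 := by nlinarith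
  have hden : 0 < t - t ^ 3 / 6 := by nlinarith
  have hM : t / arsinh t ≤ t / (t - t ^ 3 / 6) :=
    div_le_div_of_nonneg_left ht0.le hden (sub_cube_div_six_le_arsinh ht0 ht)
  have hG : β * (1 - s / 2 - s ^ 2) ≤ β * √(1 - s) :=
    mul_le_mul_of_nonneg_left (one_sub_div_two_sub_sq_le_sqrt_one_sub hs0.le hs1) hβ0
  have hmean :
      1 + s / 6 + 17 / 18 * s ^ 2 + s ^ 3 ≤ β * (1 - s / 2 - s ^ 2) + (1 - β) * (1 + s) := by
    nlinarith [mul_nonneg (sub_nonneg.2 hβ) (show 0 ≤ 3 * s / 2 + s ^ 2 by positivity)]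
  have hpoly : t < (1 + s / 6 + 17 / 18 * s ^ 2 + s ^ 3) * (t - t ^ 3 / 6) := by
    have : 1 < (1 + s / 6 + 17 / 18 * s ^ 2 + s ^ 3) * (1 - s / 6) := by
      nlinarith [pow_pos hs0 3]
    nlinarith
  rw [← div_lt_iff₀ hden] at hpoly
  linarith

lemma weighted_Gmean_Cmean_le_of_le {a b α β : ℝ} (ha : 0 < a) (hb : 0 < b) (h : α ≤ β) :
    β * Gmean a b + (1 - β) * Cmean a b ≤ α * Gmean a b + (1 - α) * Cmean a b := by
  nlinarith [mul_nonneg (sub_nonneg.2 h) (sub_nonneg.2 (Gmean_le_Cmean ha hb))]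

theorem stmt2 (α : ℝ) (hα : α < 5 / 9) :
    ∃ a b : ℝ, 0 < a ∧ 0 < b ∧ a ≠ b ∧
      NS a b < α * Gmean a b + (1 - α) * Cmean a b := by
  set β := max α 0
  have hβ : β < 5 / 9 := max_lt hα (by norm_num)
  set t := √(min (1 / 4) (5 / 9 - β))
  have hmin : 0 < min (1 / 4) (5 / 9 - β) := lt_min (by norm_num) (by linarith)
  have ht0 : 0 < t := sqrt_pos.2 hmin
  have ht2 : t ^ 2 = min (1 / 4) (5 / 9 - β) := sq_sqrt hmin.le
  have ht : t ≤ 1 / 2 := by nlinarith [min_le_left (1 / 4 : ℝ) (5 / 9 - β)]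
  have ha : 0 < 1 + t := by linarith
  have hb : 0 < 1 - t := by linarith
  refine ⟨1 + t, 1 - t, ha, hb, by linarith, ?_⟩
  refine lt_of_lt_of_le ?_ (weighted_Gmean_Cmean_le_of_le ha hb (le_max_left α 0))
  rw [NS_one_add_one_sub, Gmean_one_add_one_sub, Cmean_one_add_one_sub]
  exact div_arsinh_lt_of_sq_le ht0 ht (le_max_right α 0)
    (by linarith [min_le_right (1 / 4 : ℝ) (5 / 9 - β)])
end

section
/- If β > 1 − 1/(2·log(1+√2)), then there exist a, b > 0 with a ≠ b such that M(a,b) > β·G(a,b) + (1−β)·C(a,b); that is, the constant 1 − 1/(2·log(1+√2)) in the upper bound is optimal. -/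
open Topology

theorem Real.arsinh_one : Real.arsinh 1 = Real.log (1 + √2) := by
  rw [Real.arsinh]; norm_num

theorem NS_one_zero : NS 1 0 = 1 / (2 * Real.log (1 + √2)) := by
  simp [NS, Real.arsinh_one]

theorem continuousAt_NS {a b : ℝ} (hab : a ≠ b) (hsum : a + b ≠ 0) : ContinuousAt (NS a) b := by
  have harsinh : Real.arsinh ((a - b) / (a + b)) ≠ 0 := by
    rw [Ne, Real.arsinh_eq_zero_iff]
    exact div_ne_zero (sub_ne_zero.mpr hab) hsum
  unfold NS
  exact (continuousAt_const.sub continuousAt_id).div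
    (continuousAt_const.mul ((continuousAt_const.sub continuousAt_id).div
      (continuousAt_const.add continuousAt_id) hsum).arsinh)
    (mul_ne_zero two_ne_zero harsinh)

theorem continuous_Gmean (a : ℝ) : Continuous (Gmean a) := by
  unfold Gmean; fun_prop

theorem continuousAt_Cmean {a b : ℝ} (hsum : a + b ≠ 0) : ContinuousAt (Cmean a) b := by
  unfold Cmean
  exact (continuousAt_const.add (continuousAt_id.pow 2)).div
    (continuousAt_const.add continuousAt_id) hsum

theorem stmt3 (β : ℝ) (hβ : β > 1 - 1 / (2 * Real.log (1 + Real.sqrt 2))) :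
    ∃ a b : ℝ, 0 < a ∧ 0 < b ∧ a ≠ b ∧
      NS a b > β * Gmean a b + (1 - β) * Cmean a b := by
  have hlt_zero : β * Gmean 1 0 + (1 - β) * Cmean 1 0 < NS 1 0 := by
    have hG : Gmean 1 0 = 0 := by simp [Gmean]
    have hC : Cmean 1 0 = 1 := by norm_num [Cmean]
    rw [hG, hC, NS_one_zero]
    linarith
  have hcont : ContinuousAt (fun b => β * Gmean 1 b + (1 - β) * Cmean 1 b) 0 :=
    (continuousAt_const.mul (continuous_Gmean 1).continuousAt).add
      (continuousAt_const.mul (continuousAt_Cmean (by norm_num)))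
  have hnear : ∀ᶠ b in 𝓝 (0 : ℝ), β * Gmean 1 b + (1 - β) * Cmean 1 b < NS 1 b ∧ b < 1 :=
    (hcont.eventually_lt (continuousAt_NS (by norm_num) (by norm_num)) hlt_zero).and
      (eventually_lt_nhds zero_lt_one)
  obtain ⟨b, ⟨hlt, hb1⟩, hb0⟩ := ((hnear.filter_mono nhdsWithin_le_nhds).and
    (self_mem_nhdsWithin : ∀ᶠ b in 𝓝[>] (0 : ℝ), 0 < b)).exists
  exact ⟨1, b, one_pos, hb0, hb1.ne', hlt⟩
end

section
/- For p = 5/9 and all t ∈ (0,1), φ_p(t) := arsinh(√(1−t²)) − √(1−t²)/((p−1)t² + p·t + 2 − 2p) is strictly negative. -/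
/-!
Write `s = √(1 - t²)` and `d` for the denominator. Since `arsinh` is increasing, the claim
`arsinh s < s / d` is `s < sinh (s / d)`. The cubic Taylor bound `x + x³/6 < sinh x` reduces
this to `s ≤ s / d + (s / d)³ / 6`, i.e. to the polynomial inequality `6 d³ ≤ 6 d² + 1 - t²`
on `(0, 1)`.
-/

namespace Real

theorem add_pow_three_div_six_lt_sinh {x : ℝ} (hx : 0 < x) : x + x ^ 3 / 6 < sinh x := by
  have h := sum_le_hasSum (Finset.range 3) (fun n _ => by positivity) (hasSum_sinh x)
  norm_num [Finset.sum_range_succ, Nat.factorial] at h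
  linarith [pow_pos hx 5]

theorem arsinh_lt_of_le_add_pow_three_div_six {s x : ℝ} (hx : 0 < x) (h : s ≤ x + x ^ 3 / 6) :
    arsinh s < x := by
  rw [← arsinh_sinh x, arsinh_lt_arsinh]
  exact h.trans_lt (add_pow_three_div_six_lt_sinh hx)

end Real

theorem le_div_add_div_pow_three_div_six {s d : ℝ} (hs : 0 < s) (hd : 0 < d)
    (h : 6 * d ^ 3 ≤ 6 * d ^ 2 + s ^ 2) : s ≤ s / d + (s / d) ^ 3 / 6 := by
  rw [div_pow, ← sub_nonneg]
  have key : s / d + s ^ 3 / d ^ 3 / 6 - s = s * (6 * d ^ 2 + s ^ 2 - 6 * d ^ 3) / (6 * d ^ 3) := by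
    field_simp
  rw [key]
  exact div_nonneg (mul_nonneg hs.le (sub_nonneg.mpr h)) (by positivity)

/-- Equality holds in the limit `t → 1`, where `d → 1`: here `d - 1 = (4t - 1)(1 - t)/9`. -/
theorem denom_pos_and_six_mul_pow_three_le {t d : ℝ} (ht0 : 0 < t) (ht1 : t < 1)
    (hd : d = (5 / 9 - 1) * t ^ 2 + (5 / 9) * t + 2 - 2 * (5 / 9)) :
    0 < d ∧ 6 * d ^ 3 ≤ 6 * d ^ 2 + (1 - t ^ 2) := by
  subst hd
  constructor
  · nlinarith
  · nlinarith [mul_pos ht0 (sub_pos.mpr ht1), sq_nonneg (t * (1 - t)), sq_nonneg (1 - t)]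

theorem stmt4 (t : ℝ) (ht : t ∈ Set.Ioo (0 : ℝ) 1) :
    Real.arsinh (Real.sqrt (1 - t ^ 2)) -
      Real.sqrt (1 - t ^ 2) /
        ((5 / 9 - 1) * t ^ 2 + (5 / 9) * t + 2 - 2 * (5 / 9)) < 0 := by
  obtain ⟨ht0, ht1⟩ := ht
  have hsq : 0 < 1 - t ^ 2 := by nlinarith
  have hs : 0 < Real.sqrt (1 - t ^ 2) := Real.sqrt_pos.mpr hsq
  obtain ⟨hd, hcube⟩ := denom_pos_and_six_mul_pow_three_le ht0 ht1 rfl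
  rw [← Real.sq_sqrt hsq.le] at hcube
  have := Real.arsinh_lt_of_le_add_pow_three_div_six (div_pos hs hd)
    (le_div_add_div_pow_three_div_six hs hd hcube)
  linarith
end

section
/- For p = 1 − 1/(2·log(1+√2)) and all t ∈ (0,1), φ_p(t) := arsinh(√(1−t²)) − √(1−t²)/((p−1)t² + p·t + 2 − 2p) is strictly positive. -/
/-!
Write `L = arsinh 1 = log (1 + √2)`, so that `5/6 ≤ L < 1`, and `s = √(1 - t²)`. The denominator
equals `D = t + (1 - t)(2 + t)/(2L)`, and we must show `s / D < arsinh s`. For `t ≤ 3/5` use the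
chord bound `s L ≤ arsinh s` (concavity of `arsinh` on `[0, 1]`) together with `L D > 1`; for
`t > 3/5` use the Taylor bound `s - s³/6 ≤ arsinh s` together with `D (5 + t²) > 6`.
-/

open Real Set

lemma one_sub_sq_div_two_le_inv_sqrt_one_add_sq (x : ℝ) : 1 - x ^ 2 / 2 ≤ (√(1 + x ^ 2))⁻¹ := by
  have hr : 0 < √(1 + x ^ 2) := by positivity
  have hr2 : √(1 + x ^ 2) ^ 2 = 1 + x ^ 2 := sq_sqrt (by positivity)
  rw [← one_div, le_div_iff₀ hr]
  nlinarith [sq_nonneg ((1 - x ^ 2 / 2) * √(1 + x ^ 2) - 1), sq_nonneg x, sq_nonneg (x * x)]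

namespace Real

lemma convexOn_sinh_Ici : ConvexOn ℝ (Ici 0) sinh :=
  MonotoneOn.convexOn_of_deriv (convex_Ici 0) continuous_sinh.continuousOn
    differentiable_sinh.differentiableOn fun x hx y hy hxy => by
      rw [interior_Ici] at hx hy
      rw [deriv_sinh, cosh_le_cosh, abs_of_pos hx, abs_of_pos hy]
      exact hxy

lemma mul_arsinh_one_le_arsinh {s : ℝ} (h0 : 0 ≤ s) (h1 : s ≤ 1) :
    s * arsinh 1 ≤ arsinh s := by
  have hconv := convexOn_sinh_Ici.2 self_mem_Ici (arsinh_nonneg_iff.2 zero_le_one)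
    (sub_nonneg.2 h1) h0 (sub_add_cancel 1 s)
  simp only [smul_eq_mul, mul_zero, zero_add, sinh_zero, sinh_arsinh, mul_one] at hconv
  simpa only [arsinh_sinh] using arsinh_le_arsinh.2 hconv

lemma sub_pow_three_div_six_le_arsinh {s : ℝ} (hs : 0 ≤ s) : s - s ^ 3 / 6 ≤ arsinh s := by
  let f : ℝ → ℝ := fun x => arsinh x - x + x ^ 3 / 6
  have hf : ∀ x, HasDerivAt f ((√(1 + x ^ 2))⁻¹ - 1 + x ^ 2 / 2) x := fun x =>
    (((hasDerivAt_arsinh x).sub (hasDerivAt_id x)).add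
      ((hasDerivAt_pow 3 x).div_const 6)).congr_deriv (by norm_num; ring)
  have hmono : Monotone f := monotone_of_deriv_nonneg (fun x => (hf x).differentiableAt)
    fun x => by
      rw [(hf x).deriv]
      linarith [one_sub_sq_div_two_le_inv_sqrt_one_add_sq x]
  have := hmono hs
  simp only [f, arsinh_zero] at this
  linarith

lemma arsinh_lt_self {x : ℝ} (hx : 0 < x) : arsinh x < x := by
  simpa only [arsinh_sinh] using arsinh_lt_arsinh.2 (self_lt_sinh_iff.2 hx)

lemma arsinh_one_s5 : arsinh 1 = log (1 + √2) := by
  norm_num [arsinh]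

lemma div_lt_arsinh_of_one_lt_arsinh_one_mul {s D : ℝ} (hs0 : 0 < s) (hs1 : s ≤ 1)
    (hD : 1 < arsinh 1 * D) : s / D < arsinh s := by
  have hD0 : 0 < D := pos_of_mul_pos_right (one_pos.trans hD) (arsinh_nonneg_iff.2 zero_le_one)
  calc s / D < s * arsinh 1 := by
        rw [div_lt_iff₀ hD0, mul_assoc]
        exact lt_mul_of_one_lt_right hs0 hD
    _ ≤ arsinh s := mul_arsinh_one_le_arsinh hs0.le hs1

lemma div_lt_arsinh_of_six_lt_mul {s D : ℝ} (hs : 0 < s) (hD0 : 0 < D)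
    (hD : 6 < D * (6 - s ^ 2)) : s / D < arsinh s := by
  calc s / D < s - s ^ 3 / 6 := by
        rw [div_lt_iff₀ hD0]
        nlinarith
    _ ≤ arsinh s := sub_pow_three_div_six_le_arsinh hs.le

end Real

theorem stmt5 (t : ℝ) (ht : t ∈ Set.Ioo (0 : ℝ) 1) :
    let p : ℝ := 1 - 1 / (2 * Real.log (1 + Real.sqrt 2))
    Real.arsinh (Real.sqrt (1 - t ^ 2)) -
      Real.sqrt (1 - t ^ 2) / ((p - 1) * t ^ 2 + p * t + 2 - 2 * p) > 0 := by
  intro p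
  obtain ⟨ht0, ht1⟩ := ht
  set L := arsinh 1
  have hL0 : 5 / 6 ≤ L := by linarith [sub_pow_three_div_six_le_arsinh zero_le_one]
  have hL1 : L < 1 := arsinh_lt_self one_pos
  have hD : (p - 1) * t ^ 2 + p * t + 2 - 2 * p = t + (1 - t) * (2 + t) / (2 * L) := by
    simp only [p, ← arsinh_one_s5]
    field_simp
    ring
  set s := √(1 - t ^ 2)
  have hs2 : s ^ 2 = 1 - t ^ 2 := sq_sqrt (by nlinarith)
  have hs0 : 0 < s := sqrt_pos.2 (by nlinarith)
  have hs1 : s ≤ 1 := sqrt_le_one.2 (by nlinarith)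
  rw [gt_iff_lt, sub_pos, hD]
  rcases le_or_gt t (3 / 5) with ht | ht
  · apply div_lt_arsinh_of_one_lt_arsinh_one_mul hs0 hs1
    have hLD : L * (t + (1 - t) * (2 + t) / (2 * L)) = L * t + (1 - t) * (2 + t) / 2 := by
      field_simp
    rw [hLD]
    nlinarith
  · have hq : (1 - t) * (2 + t) / 2 < (1 - t) * (2 + t) / (2 * L) :=
      div_lt_div_of_pos_left (by nlinarith) (by positivity) (by linarith)
    apply div_lt_arsinh_of_six_lt_mul hs0 (by positivity)
    -- `(t + (1 - t)(2 + t)/2)(5 + t²) - 6 = (1 - t)(t³ + 3t - 2)/2`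
    have hcubic : 0 < t ^ 3 + 3 * t - 2 := by nlinarith
    rw [hs2]
    nlinarith [mul_pos (sub_pos.2 ht1) hcubic]
end

section
/- For all t ∈ (0,1), the function g(t) = −45t + 216t² − 144t⁴ − (64 + 160t − 117t² − 160t³ + 80t⁴)·√(2−t²) is strictly negative. -/
/-! Since `√(2 - t²) ≥ 1` and its coefficient `B(t)` is positive, `g(t) ≤ A(t) - B(t)`, where `A` is the
square-root-free part. The difference factors as `A(t) - B(t) = -(1 - t)(64 + 269t - 64t² - 224t³)`, and
the cubic factor is concave on `[0, 1]` and positive at both endpoints. -/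

lemma one_le_sqrt_two_sub_sq {t : ℝ} (ht : t ^ 2 ≤ 1) : 1 ≤ √(2 - t ^ 2) :=
  Real.one_le_sqrt.mpr (by linarith)

lemma sqrt_coeff_pos {t : ℝ} (h0 : 0 ≤ t) (h1 : t ≤ 1) :
    0 < 64 + 160 * t - 117 * t ^ 2 - 160 * t ^ 3 + 80 * t ^ 4 := by
  -- `80u² - 117u + 64` has negative discriminant, and `160t(1 - t²) ≥ 0`
  have hquad : 0 < 80 * (t ^ 2) ^ 2 - 117 * t ^ 2 + 64 := by nlinarith [sq_nonneg (80 * t ^ 2 - 117 / 2)]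
  have hrest : 0 ≤ 160 * t * (1 - t ^ 2) := by
    have : t ^ 2 ≤ 1 := by nlinarith
    positivity
  nlinarith

lemma concave_cubic_pos {t : ℝ} (h0 : 0 ≤ t) (h1 : t ≤ 1) :
    0 < 64 + 269 * t - 64 * t ^ 2 - 224 * t ^ 3 := by
  nlinarith [mul_nonneg h0 (sub_nonneg.mpr h1), mul_nonneg (mul_nonneg h0 h0) (sub_nonneg.mpr h1)]

theorem stmt9 (t : ℝ) (ht : t ∈ Set.Ioo (0 : ℝ) 1) :
    -45 * t + 216 * t ^ 2 - 144 * t ^ 4 -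
      (64 + 160 * t - 117 * t ^ 2 - 160 * t ^ 3 + 80 * t ^ 4) *
        Real.sqrt (2 - t ^ 2) < 0 := by
  obtain ⟨h0, h1⟩ := ht
  have hs : 1 ≤ √(2 - t ^ 2) := one_le_sqrt_two_sub_sq (by nlinarith)
  have hB := sqrt_coeff_pos h0.le h1.le
  have hdiff : 0 < (1 - t) * (64 + 269 * t - 64 * t ^ 2 - 224 * t ^ 3) :=
    mul_pos (sub_pos.mpr h1) (concave_cubic_pos h0.le h1.le)
  linarith [mul_le_mul_of_nonneg_left hs hB.le]
end

section
/- For all t ∈ (3/4, 1), (864 + 45t − 4320t² + 2304t⁴)/√2 + 532 + 2560t − 2973t² − 2560t³ + 2000t⁴ < 0. -/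
/-!
On `(3/4, 1)` the quartic `A` is negative, so dividing it by `√2 < 10/7` can be replaced by
multiplying it by `7/10`; the resulting polynomial `7/10 · A + B` is negative on the interval.
-/

namespace Lemma21

def A (t : ℝ) : ℝ := 864 + 45 * t - 4320 * t ^ 2 + 2304 * t ^ 4

def B (t : ℝ) : ℝ := 532 + 2560 * t - 2973 * t ^ 2 - 2560 * t ^ 3 + 2000 * t ^ 4

theorem A_neg {t : ℝ} (ht : t ∈ Set.Ioo (3 / 4 : ℝ) 1) : A t < 0 := by
  obtain ⟨h34, h1⟩ := ht
  have hprod : 0 ≤ (t - 3 / 4) * (1 - t) := mul_nonneg (by linarith) (by linarith)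
  unfold A
  nlinarith [mul_nonneg hprod (sq_nonneg t), sq_nonneg (t - 3 / 4), sq_nonneg (1 - t)]

theorem seven_tenths_mul_add_B_neg {t : ℝ} (ht : t ∈ Set.Ioo (3 / 4 : ℝ) 1) :
    7 / 10 * A t + B t < 0 := by
  obtain ⟨h34, h1⟩ := ht
  have hprod : 0 ≤ (t - 3 / 4) * (1 - t) := mul_nonneg (by linarith) (by linarith)
  unfold A B
  nlinarith [mul_nonneg hprod (sq_nonneg t), sq_nonneg (t - 3 / 4), sq_nonneg (1 - t)]

end Lemma21

theorem div_sqrt_two_lt_of_neg {a : ℝ} (ha : a < 0) : a / Real.sqrt 2 < 7 / 10 * a := by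
  have hsqrt : 7 / 10 * Real.sqrt 2 < 1 := by
    nlinarith [Real.sq_sqrt (zero_le_two : (0 : ℝ) ≤ 2), Real.sqrt_nonneg 2]
  rw [div_lt_iff₀ (by positivity)]
  nlinarith

theorem stmt12 (t : ℝ) (ht : t ∈ Set.Ioo (3 / 4 : ℝ) 1) :
    (864 + 45 * t - 4320 * t ^ 2 + 2304 * t ^ 4) / Real.sqrt 2 +
      532 + 2560 * t - 2973 * t ^ 2 - 2560 * t ^ 3 + 2000 * t ^ 4 < 0 := by
  have hdiv := div_sqrt_two_lt_of_neg (Lemma21.A_neg ht)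
  have hpoly := Lemma21.seven_tenths_mul_add_B_neg ht
  simp only [Lemma21.A, Lemma21.B] at hdiv hpoly
  linarith
end

section
/- Let δ = log(1+√2). For all t ∈ (0, 1/2], C(t) + D(t) < 0, where C(t) = 2δ·t·(1 − 2δ + 6t − 4t³) and D(t) = −4 + (8−16δ)t + (9+12δ−12δ²)t² + (16δ−8)t³ − 5t⁴. -/
/-! Only `δ ≥ 1/2` is needed, and `δ ≥ log 2 > 1/2`. Writing `δ = 1/2 + s`, the left-hand side
equals `(-4 + 18t² - 9t⁴) + s t (-18 + 12t + 16t² - 8t³) - s² (4t + 12t²)`, whose three terms are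
respectively negative, nonpositive and nonpositive for `0 ≤ t ≤ 1/2` and `s ≥ 0`. -/

lemma one_half_lt_log_one_add_sqrt_two : 1 / 2 < Real.log (1 + Real.sqrt 2) :=
  calc (1 / 2 : ℝ) < Real.log 2 := by linarith [Real.log_two_gt_d9]
    _ ≤ Real.log (1 + Real.sqrt 2) :=
      Real.log_le_log two_pos (by linarith [Real.one_le_sqrt.mpr one_le_two])

lemma quartic_neg_of_le_half_of_half_le {t d : ℝ} (ht₀ : 0 ≤ t) (ht : t ≤ 1 / 2)
    (hd : 1 / 2 ≤ d) :
    2 * d * t * (1 - 2 * d + 6 * t - 4 * t ^ 3) +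
      (-4 + (8 - 16 * d) * t + (9 + 12 * d - 12 * d ^ 2) * t ^ 2 +
        (16 * d - 8) * t ^ 3 - 5 * t ^ 4) < 0 := by
  have hsplit : 2 * d * t * (1 - 2 * d + 6 * t - 4 * t ^ 3) +
      (-4 + (8 - 16 * d) * t + (9 + 12 * d - 12 * d ^ 2) * t ^ 2 +
        (16 * d - 8) * t ^ 3 - 5 * t ^ 4) =
      (-4 + 18 * t ^ 2 - 9 * t ^ 4) + (d - 1 / 2) * t * (-18 + 12 * t + 16 * t ^ 2 - 8 * t ^ 3)
        - (d - 1 / 2) ^ 2 * (4 * t + 12 * t ^ 2) := by ring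
  have ht2 : t ^ 2 ≤ 1 / 4 := by nlinarith
  have hbase : -4 + 18 * t ^ 2 - 9 * t ^ 4 < 0 := by
    nlinarith [mul_nonneg (sub_nonneg.mpr ht2) (by linarith : (0 : ℝ) ≤ 7 / 4 - t ^ 2)]
  have hlin : (d - 1 / 2) * t * (-18 + 12 * t + 16 * t ^ 2 - 8 * t ^ 3) ≤ 0 :=
    mul_nonpos_of_nonneg_of_nonpos (mul_nonneg (by linarith) ht₀) (by nlinarith)
  have hquad : 0 ≤ (d - 1 / 2) ^ 2 * (4 * t + 12 * t ^ 2) := by positivity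
  linarith

theorem stmt14 (t : ℝ) (ht : t ∈ Set.Ioc (0 : ℝ) (1 / 2)) :
    let δ := Real.log (1 + Real.sqrt 2)
    2 * δ * t * (1 - 2 * δ + 6 * t - 4 * t ^ 3) +
      (-4 + (8 - 16 * δ) * t + (9 + 12 * δ - 12 * δ ^ 2) * t ^ 2 +
        (16 * δ - 8) * t ^ 3 - 5 * t ^ 4) < 0 :=
  quartic_neg_of_le_half_of_half_le ht.1.le ht.2 one_half_lt_log_one_add_sqrt_two.le
end
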